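/- Let R be a rewrite system over F and t ∈ T(F, X). For every ground substitution α with Var(t) ⊆ Dom(α) that maps every abstraction variable occurring in t to an R-normal form, and every innermost rewrite chain αt →^inn_{p_1, l_1→r_1} t_1 →^inn_{p_2, l_2→r_2} t_2 →^inn … →^inn_{p_n, l_n→r_n} t_n starting from αt, every rule used in the chain belongs to the usable rules of t: l_i→r_i ∈ U(t) for all i ∈ {1,…,n}. -/

import Mathlib

namespace TRS

inductive Term (F V : Type*) where
  | var : V → Term F V
  | app : F → List (Term F V) → Term F V

namespace Term

variable {F V : Type*}

mutual
  def subst (σ : V → Term F V) : Term F V → Term F V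
    | .var x => σ x
    | .app f ts => .app f (substList σ ts)

  def substList (σ : V → Term F V) : List (Term F V) → List (Term F V)
    | [] => []
    | t :: ts => subst σ t :: substList σ ts
end

mutual
  def vars : Term F V → Set V
    | .var x => {x}
    | .app _ ts => varsList ts

  def varsList : List (Term F V) → Set V
    | [] => ∅
    | t :: ts => vars t ∪ varsList ts
end

def IsGround (t : Term F V) : Prop := vars t = ∅

def top : Term F V → Option F
  | .var _ => none
  | .app f _ => some f

def subtermAt : List ℕ → Term F V → Option (Term F V)
  | [], t => some t
  | _ :: _, .var _ => none
  | i :: p, .app _ ts =>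
    match ts[i]? with
    | none => none
    | some u => subtermAt p u

def replaceAt : List ℕ → Term F V → Term F V → Option (Term F V)
  | [], _, u => some u
  | _ :: _, .var _, _ => none
  | i :: p, .app f ts, u =>
    match ts[i]? with
    | none => none
    | some ti =>
      match replaceAt p ti u with
      | none => none
      | some ti' => some (.app f (ts.set i ti'))

inductive WF (arity : F → ℕ) : Term F V → Prop
  | var (x : V) : WF arity (.var x)
  | app (f : F) (ts : List (Term F V)) :
      ts.length = arity f → (∀ t ∈ ts, WF arity t) → WF arity (.app f ts)

inductive Occurs (f : F) : Term F V → Prop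
  | head (ts : List (Term F V)) : Occurs f (.app f ts)
  | arg {g : F} {ts : List (Term F V)} {t : Term F V} :
      t ∈ ts → Occurs f t → Occurs f (.app g ts)

end Term

open Term

structure Rule (F V : Type*) where
  lhs : Term F V
  rhs : Term F V

variable {F V : Type*}

/-- The domain of a substitution. -/
def SDom (σ : V → Term F V) : Set V := {x | σ x ≠ Term.var x}

/-- The range (variables) of a substitution. -/
def SRan (σ : V → Term F V) : Set V := ⋃ x ∈ SDom σ, vars (σ x)

/-- A ground substitution maps every variable of its domain to a ground term. -/
def GroundSubst (σ : V → Term F V) : Prop := ∀ x ∈ SDom σ, IsGround (σ x)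

/-- `R` is a rewrite system: no left-hand side is a variable, and
`Var(rhs) ⊆ Var(lhs)` for every rule. -/
def IsRS (R : List (Rule F V)) : Prop :=
  ∀ ρ ∈ R, (∀ x : V, ρ.lhs ≠ Term.var x) ∧ vars ρ.rhs ⊆ vars ρ.lhs

/-- Rewriting at position `p` with the rule `l → r`. -/
def RewriteAtWith (l r : Term F V) (p : List ℕ) (s t : Term F V) : Prop :=
  ∃ τ : V → Term F V, subtermAt p s = some (subst τ l) ∧ replaceAt p s (subst τ r) = some t

/-- Rewriting at position `p` with some rule of `R`. -/
def RewriteAt (R : List (Rule F V)) (p : List ℕ) (s t : Term F V) : Prop :=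
  ∃ ρ ∈ R, RewriteAtWith ρ.lhs ρ.rhs p s t

/-- The rewriting relation induced by `R`. -/
def Rewrite (R : List (Rule F V)) (s t : Term F V) : Prop :=
  ∃ p, RewriteAt R p s t

def ReducibleAt (R : List (Rule F V)) (s : Term F V) (p : List ℕ) : Prop :=
  ∃ t, RewriteAt R p s t

def Reducible (R : List (Rule F V)) (s : Term F V) : Prop :=
  ∃ t, Rewrite R s t

def NormalForm (R : List (Rule F V)) (s : Term F V) : Prop := ¬ Reducible R s

/-- `n` is a normal form of `s`. -/
def IsNormalFormOf (R : List (Rule F V)) (s n : Term F V) : Prop :=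
  Relation.ReflTransGen (Rewrite R) s n ∧ NormalForm R n

/-- `q` is strictly below `p` (`p` is a strict prefix of `q`). -/
def StrictBelow (p q : List ℕ) : Prop := p <+: q ∧ p ≠ q

/-- Innermost rewrite step at position `p`. -/
def InnAt (R : List (Rule F V)) (p : List ℕ) (s t : Term F V) : Prop :=
  RewriteAt R p s t ∧ ∀ q, StrictBelow p q → ¬ ReducibleAt R s q

def InnStep (R : List (Rule F V)) (s t : Term F V) : Prop := ∃ p, InnAt R p s t

/-- Outermost rewrite step at position `p`. -/
def OutAt (R : List (Rule F V)) (p : List ℕ) (s t : Term F V) : Prop :=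
  RewriteAt R p s t ∧ ∀ q, StrictBelow q p → ¬ ReducibleAt R s q

def OutStep (R : List (Rule F V)) (s t : Term F V) : Prop := ∃ p, OutAt R p s t

/-- Innermost rewrite step at position `p` with rule `l → r`. -/
def InnAtWith (R : List (Rule F V)) (l r : Term F V) (p : List ℕ) (s t : Term F V) : Prop :=
  RewriteAtWith l r p s t ∧ ∀ q, StrictBelow p q → ¬ ReducibleAt R s q

/-- Outermost rewrite step at position `p` with rule `l → r`. -/
def OutAtWith (R : List (Rule F V)) (l r : Term F V) (p : List ℕ) (s t : Term F V) : Prop :=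
  RewriteAtWith l r p s t ∧ ∀ q, StrictBelow q p → ¬ ReducibleAt R s q

/-- No infinite innermost derivation starts from `t`. -/
def InnTerminates (R : List (Rule F V)) (t : Term F V) : Prop :=
  ¬ ∃ f : ℕ → Term F V, f 0 = t ∧ ∀ n, InnStep R (f n) (f (n + 1))

/-- No infinite outermost derivation starts from `t`. -/
def OutTerminates (R : List (Rule F V)) (t : Term F V) : Prop :=
  ¬ ∃ f : ℕ → Term F V, f 0 = t ∧ ∀ n, OutStep R (f n) (f (n + 1))

def Unifies (σ : V → Term F V) (u v : Term F V) : Prop := subst σ u = subst σ v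

/-- `σ` is a most general unifier of `u` and `v`. -/
def IsMGU (u v : Term F V) (σ : V → Term F V) : Prop :=
  Unifies σ u v ∧
    ∀ τ : V → Term F V, Unifies τ u v → ∃ ρ : V → Term F V, ∀ x, subst ρ (σ x) = τ x

/-- The usable rules of a term (least set closed under the defining equations). -/
inductive Usable (R : List (Rule F V)) (XA : Set V) : Term F V → Rule F V → Prop
  | var {x : V} {ρ : Rule F V} : x ∉ XA → ρ ∈ R → Usable R XA (Term.var x) ρ
  | rls {f : F} {ts : List (Term F V)} {ρ : Rule F V} :
      ρ ∈ R → Term.top ρ.lhs = some f → Usable R XA (Term.app f ts) ρ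
  | arg {f : F} {ts : List (Term F V)} {t : Term F V} {ρ : Rule F V} :
      t ∈ ts → Usable R XA t ρ → Usable R XA (Term.app f ts) ρ
  | rhs {f : F} {ts : List (Term F V)} {ρ' ρ : Rule F V} :
      ρ' ∈ R → Term.top ρ'.lhs = some f → Usable R XA ρ'.rhs ρ → Usable R XA (Term.app f ts) ρ

/-! If some variable of `t` is not an abstraction variable, then `U(t) = R`. Otherwise `αt` is
obtained from `t` by plugging normal forms into its variable occurrences, and this shape is
preserved along an innermost chain: the redex cannot lie inside a plugged normal form, so it sits
at an occurrence of some `f` in the current skeleton `u`, its rule lies in `Rls(f) ⊆ U(u)`, its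
matcher sends variables to normal forms, and contracting it yields a skeleton `u'` with
`U(u') ⊆ U(u)`. -/

theorem vars_app (f : F) (ts : List (Term F V)) : vars (.app f ts) = ⋃ t ∈ ts, vars t := by
  show varsList ts = _
  induction ts with
  | nil => simp [varsList]
  | cons t ts ih => simp [varsList, ih]

theorem subst_app (σ : V → Term F V) (f : F) (ts : List (Term F V)) :
    subst σ (.app f ts) = .app f (ts.map (subst σ)) := by
  show Term.app f (substList σ ts) = _
  congr
  induction ts with
  | nil => rfl
  | cons t ts ih => simp [substList, ih]

theorem subtermAt_cons_app (i : ℕ) (p : List ℕ) (f : F) (ts : List (Term F V)) :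
    subtermAt (i :: p) (.app f ts) = ts[i]?.bind (subtermAt p) := by
  simp only [subtermAt]
  cases ts[i]? <;> rfl

theorem replaceAt_cons_app (i : ℕ) (p : List ℕ) (f : F) (ts : List (Term F V)) (v : Term F V) :
    replaceAt (i :: p) (.app f ts) v =
      ts[i]?.bind fun ti => (replaceAt p ti v).map fun ti' => .app f (ts.set i ti') := by
  simp only [replaceAt]
  split <;> rename_i hti <;> rw [hti]
  · rfl
  · split <;> rename_i h <;> simp [h]

theorem subtermAt_append {q : List ℕ} {s w : Term F V} (h : subtermAt q s = some w)
    (q' : List ℕ) : subtermAt (q ++ q') s = subtermAt q' w := by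
  induction q generalizing s with
  | nil => cases h; rfl
  | cons i q ih =>
    cases s with
    | var => simp [subtermAt] at h
    | app f ts =>
      rw [subtermAt_cons_app] at h
      obtain ⟨ti, hti, h⟩ := Option.bind_eq_some_iff.mp h
      rw [List.cons_append, subtermAt_cons_app, hti, Option.bind_some, ih h]

theorem exists_replaceAt {q : List ℕ} {s w : Term F V} (h : subtermAt q s = some w)
    (v : Term F V) : ∃ s', replaceAt q s v = some s' := by
  induction q generalizing s with
  | nil => exact ⟨v, rfl⟩
  | cons i q ih =>
    cases s with
    | var => simp [subtermAt] at h
    | app f ts =>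
      rw [subtermAt_cons_app] at h
      obtain ⟨ti, hti, h⟩ := Option.bind_eq_some_iff.mp h
      obtain ⟨s', hs'⟩ := ih h
      exact ⟨_, by rw [replaceAt_cons_app, hti, Option.bind_some, hs', Option.map_some]⟩

theorem subtermAt_subst (σ : V → Term F V) {q : List ℕ} {u w : Term F V}
    (h : subtermAt q u = some w) : subtermAt q (subst σ u) = some (subst σ w) := by
  induction q generalizing u with
  | nil => cases h; rfl
  | cons i q ih =>
    cases u with
    | var => simp [subtermAt] at h
    | app f ts =>
      rw [subtermAt_cons_app] at h
      obtain ⟨ti, hti, h⟩ := Option.bind_eq_some_iff.mp h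
      rw [subst_app, subtermAt_cons_app, List.getElem?_map, hti, Option.map_some,
        Option.bind_some, ih h]

theorem exists_subtermAt_var {x : V} : ∀ {u : Term F V}, x ∈ vars u →
    ∃ q, subtermAt q u = some (.var x)
  | .var y, h => by
    obtain rfl : x = y := h
    exact ⟨[], rfl⟩
  | .app f ts, h => by
    rw [vars_app, Set.mem_iUnion₂] at h
    obtain ⟨t, ht, hx⟩ := h
    obtain ⟨i, hi, rfl⟩ := List.getElem_of_mem ht
    obtain ⟨q, hq⟩ := exists_subtermAt_var hx
    exact ⟨i :: q, by rw [subtermAt_cons_app, List.getElem?_eq_getElem hi, Option.bind_some, hq]⟩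

theorem ReducibleAt.of_subtermAt {R : List (Rule F V)} {q q' : List ℕ} {s w : Term F V}
    (h : subtermAt q s = some w) (hw : ReducibleAt R w q') : ReducibleAt R s (q ++ q') := by
  obtain ⟨-, ρ, hρ, τ, hredex, -⟩ := hw
  have hsub : subtermAt (q ++ q') s = some (subst τ ρ.lhs) := by rw [subtermAt_append h, hredex]
  obtain ⟨s', hs'⟩ := exists_replaceAt hsub (subst τ ρ.rhs)
  exact ⟨s', ρ, hρ, τ, hsub, hs'⟩

theorem _root_.List.Forall₂.exists_of_getElem?_right {α β : Type*} {P : α → β → Prop}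
    {as : List α} {bs : List β} (h : List.Forall₂ P as bs) {i : ℕ} {b : β}
    (hb : bs[i]? = some b) : ∃ a, as[i]? = some a ∧ P a b := by
  induction h generalizing i with
  | nil => simp at hb
  | @cons a _ _ _ hab _ ih =>
    cases i with
    | zero =>
      obtain rfl : _ = b := Option.some.inj hb
      exact ⟨a, rfl, hab⟩
    | succ i => exact ih (by simpa using hb)

theorem _root_.List.Forall₂.set {α β : Type*} {P : α → β → Prop} {as : List α} {bs : List β}
    (h : List.Forall₂ P as bs) (i : ℕ) {a : α} {b : β} (hab : P a b) :
    List.Forall₂ P (as.set i a) (bs.set i b) := by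
  induction h generalizing i with
  | nil => exact .nil
  | cons hhead _ ih =>
    cases i with
    | zero => exact .cons hab ‹_›
    | succ i => exact .cons hhead (ih i)

theorem normalForm_of_subtermAt {R : List (Rule F V)} {s w : Term F V} {q : List ℕ}
    (hs : ∀ q', StrictBelow [] q' → ¬ ReducibleAt R s q') (hq : subtermAt q s = some w)
    (hne : q ≠ []) : NormalForm R w := by
  rintro ⟨w', q', hred⟩
  exact hs (q ++ q') ⟨List.nil_prefix, by simp [hne]⟩ (ReducibleAt.of_subtermAt hq ⟨w', hred⟩)

theorem normalForm_subst_of_irreducible_below {R : List (Rule F V)} {l : Term F V}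
    (hl : ∀ x, l ≠ .var x) {τ : V → Term F V}
    (hs : ∀ q, StrictBelow [] q → ¬ ReducibleAt R (subst τ l) q) {x : V} (hx : x ∈ vars l) :
    NormalForm R (τ x) := by
  obtain ⟨q, hq⟩ := exists_subtermAt_var hx
  refine normalForm_of_subtermAt hs (subtermAt_subst τ hq) ?_
  rintro rfl
  exact hl x (Option.some.inj hq)

theorem InnAtWith.of_cons_app {R : List (Rule F V)} {l r : Term F V} {i : ℕ} {p : List ℕ}
    {f : F} {gs : List (Term F V)} {g' : Term F V} (h : InnAtWith R l r (i :: p) (.app f gs) g') :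
    ∃ gi gi', gs[i]? = some gi ∧ InnAtWith R l r p gi gi' ∧ g' = .app f (gs.set i gi') := by
  obtain ⟨⟨τ, hredex, hreplace⟩, hinn⟩ := h
  rw [subtermAt_cons_app] at hredex
  obtain ⟨gi, hgi, hredex⟩ := Option.bind_eq_some_iff.mp hredex
  rw [replaceAt_cons_app, hgi, Option.bind_some] at hreplace
  obtain ⟨gi', hgi', rfl⟩ := Option.map_eq_some_iff.mp hreplace
  refine ⟨gi, gi', hgi, ⟨⟨τ, hredex, hgi'⟩, ?_⟩, rfl⟩
  rintro q ⟨hpre, hne⟩ hred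
  have hsub : subtermAt [i] (.app f gs) = some gi := by
    rw [subtermAt_cons_app, hgi, Option.bind_some]; rfl
  exact hinn (i :: q) ⟨List.cons_prefix_cons.mpr ⟨rfl, hpre⟩, by simpa using hne⟩
    (ReducibleAt.of_subtermAt hsub hred)

theorem usable_of_mem_vars {R : List (Rule F V)} {XA : Set V} {x : V} {ρ : Rule F V}
    (hx : x ∉ XA) (hρ : ρ ∈ R) : ∀ {u : Term F V}, x ∈ vars u → Usable R XA u ρ
  | .var _, rfl => .var hx hρ
  | .app f ts, h => by
    rw [vars_app, Set.mem_iUnion₂] at h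
    obtain ⟨t, ht, hxt⟩ := h
    exact .arg ht (usable_of_mem_vars hx hρ hxt)

theorem usable_app_set_le {R : List (Rule F V)} {XA : Set V} {f : F} {us : List (Term F V)}
    {i : ℕ} {u u' : Term F V} (hu : us[i]? = some u) (h : Usable R XA u' ≤ Usable R XA u) :
    Usable R XA (.app f (us.set i u')) ≤ Usable R XA (.app f us) := by
  intro ρ hρ
  cases hρ with
  | rls hmem htop => exact .rls hmem htop
  | rhs hmem htop hrhs => exact .rhs hmem htop hrhs
  | arg hw hUw =>
    rcases List.mem_or_eq_of_mem_set hw with hw | rfl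
    · exact .arg hw hUw
    · exact .arg (List.mem_of_getElem? hu) (h ρ hUw)

/-- `g` arises from `u` by replacing each variable occurrence, independently of the others,
by an `R`-normal form. -/
inductive NFInstance (R : List (Rule F V)) : Term F V → Term F V → Prop
  | var (x : V) {g : Term F V} : NormalForm R g → NFInstance R (.var x) g
  | app (f : F) {us gs : List (Term F V)} :
      List.Forall₂ (NFInstance R) us gs → NFInstance R (.app f us) (.app f gs)

theorem nfInstance_subst {R : List (Rule F V)} {σ : V → Term F V} :
    ∀ {u : Term F V}, (∀ x ∈ vars u, NormalForm R (σ x)) → NFInstance R u (subst σ u)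
  | .var x, h => .var x (h x rfl)
  | .app f ts, h => by
    rw [subst_app]
    refine .app f (List.forall₂_map_right_iff.mpr (List.forall₂_same.mpr fun t ht => ?_))
    exact nfInstance_subst fun x hx => h x (by rw [vars_app]; exact Set.mem_biUnion ht hx)

namespace NFInstance

variable {R : List (Rule F V)} {XA : Set V} {ρ : Rule F V}

theorem exists_app_of_not_normalForm {u g : Term F V} (hu : NFInstance R u g)
    (hg : ¬ NormalForm R g) :
    ∃ f us gs, u = .app f us ∧ g = .app f gs ∧ List.Forall₂ (NFInstance R) us gs := by
  cases hu with
  | var _ hnf => exact absurd hnf hg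
  | app f hargs => exact ⟨f, _, _, rfl, rfl, hargs⟩

/-- Innermostness makes the matcher of the redex send the variables of the left-hand side to
normal forms, so the contractum is an `NFInstance` of the right-hand side. -/
theorem root_step (hRS : IsRS R) (hρ : ρ ∈ R) {u g g' : Term F V}
    (h : InnAtWith R ρ.lhs ρ.rhs [] g g') (hu : NFInstance R u g) :
    ∃ f us, u = .app f us ∧ top ρ.lhs = some f ∧ NFInstance R ρ.rhs g' := by
  obtain ⟨⟨τ, hredex, hreplace⟩, hinn⟩ := h
  obtain rfl : g = subst τ ρ.lhs := Option.some.inj hredex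
  obtain rfl : subst τ ρ.rhs = g' := Option.some.inj hreplace
  obtain ⟨hl, hvars⟩ := hRS ρ hρ
  obtain ⟨f, us, gs, rfl, hg, -⟩ :=
    hu.exists_app_of_not_normalForm fun hnf => hnf ⟨_, [], ρ, hρ, τ, hredex, hreplace⟩
  refine ⟨f, us, rfl, ?_, nfInstance_subst fun x hx =>
    normalForm_subst_of_irreducible_below hl hinn (hvars hx)⟩
  cases hlhs : ρ.lhs with
  | var x => exact absurd hlhs (hl x)
  | app f' ls =>
    rw [hlhs, subst_app] at hg
    obtain ⟨rfl, -⟩ := Term.app.inj hg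
    rfl

theorem innAtWith_step (hRS : IsRS R) (hρ : ρ ∈ R) :
    ∀ {p : List ℕ} {u g g' : Term F V}, InnAtWith R ρ.lhs ρ.rhs p g g' → NFInstance R u g →
      Usable R XA u ρ ∧ ∃ u', NFInstance R u' g' ∧ Usable R XA u' ≤ Usable R XA u
  | [], u, g, g', h, hu => by
    obtain ⟨f, us, rfl, htop, hrhs⟩ := hu.root_step hRS hρ h
    exact ⟨.rls hρ htop, ρ.rhs, hrhs, fun _ => .rhs hρ htop⟩
  | i :: p, u, g, g', h, hu => by
    obtain ⟨f, us, gs, rfl, rfl, hargs⟩ :=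
      hu.exists_app_of_not_normalForm fun hnf => hnf ⟨g', i :: p, ρ, hρ, h.1⟩
    obtain ⟨gi, gi', hgi, hstep, rfl⟩ := h.of_cons_app
    obtain ⟨ui, hui, hinst⟩ := hargs.exists_of_getElem?_right hgi
    obtain ⟨hU, ui', hinst', hle⟩ := innAtWith_step hRS hρ hstep hinst
    exact ⟨.arg (List.mem_of_getElem? hui) hU, .app f (us.set i ui'),
      .app f (hargs.set i hinst'), usable_app_set_le hui hle⟩

theorem usable_of_innermost_chain (hRS : IsRS R) {t : Term F V} {n : ℕ}
    {terms : ℕ → Term F V} {pos : ℕ → List ℕ} {rules : ℕ → Rule F V}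
    (ht : NFInstance R t (terms 0))
    (hchain : ∀ i < n, rules i ∈ R ∧
        InnAtWith R (rules i).lhs (rules i).rhs (pos i) (terms i) (terms (i + 1))) :
    ∀ i < n, Usable R XA t (rules i) := by
  have reach : ∀ i ≤ n, ∃ u, NFInstance R u (terms i) ∧ Usable R XA u ≤ Usable R XA t := by
    intro i hi
    induction i with
    | zero => exact ⟨t, ht, le_rfl⟩
    | succ i ih =>
      obtain ⟨u, hu, hle⟩ := ih (by omega)
      obtain ⟨hρ, hstep⟩ := hchain i (by omega)
      obtain ⟨-, u', hu', hle'⟩ := innAtWith_step (XA := XA) hRS hρ hstep hu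
      exact ⟨u', hu', hle'.trans hle⟩
  intro i hi
  obtain ⟨u, hu, hle⟩ := reach i hi.le
  obtain ⟨hρ, hstep⟩ := hchain i hi
  exact hle _ (innAtWith_step hRS hρ hstep hu).1

end NFInstance

/-- every rule used in an innermost rewrite chain starting from a ground
instance `αt` (where `α` maps the abstraction variables of `t` to normal forms)
belongs to the usable rules `U(t)`. -/
theorem usable_rules_cover_chain {F V : Type*}
    (R : List (Rule F V)) (hRS : IsRS R) (XA : Set V)
    (t : Term F V)
    (α : V → Term F V)
    -- `α` is ground on the variables of `t` (`Var(t) ⊆ Dom(α)`)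
    (hg : ∀ x ∈ vars t, IsGround (α x))
    -- `α` maps every abstraction variable occurring in `t` to an `R`-normal form
    (hnf : ∀ x ∈ vars t, x ∈ XA → NormalForm R (α x))
    (n : ℕ) (terms : ℕ → Term F V) (pos : ℕ → List ℕ) (rules : ℕ → Rule F V)
    (h0 : terms 0 = subst α t)
    (hchain : ∀ i < n, rules i ∈ R ∧
        InnAtWith R (rules i).lhs (rules i).rhs (pos i) (terms i) (terms (i + 1))) :
    ∀ i < n, Usable R XA t (rules i) := by
  by_cases hXA : ∃ x ∈ vars t, x ∉ XA
  · obtain ⟨x, hx, hxA⟩ := hXA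
    exact fun i hi => usable_of_mem_vars hxA (hchain i hi).1 hx
  · simp only [not_exists, not_and, not_not] at hXA
    have ht : NFInstance R t (terms 0) := h0 ▸ nfInstance_subst fun x hx => hnf x hx (hXA x hx)
    exact NFInstance.usable_of_innermost_chain hRS ht hchain

end TRS
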